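/- Let A = kQ/I be a special multiserial and locally monomial algebra and N a weakly connected component of G_{Q,I}. If S_N consists of a single relation s_1 of length greater than two (σ_1 > 1), then A_N is a UMP algebra if and only if the junction path (last arrow of ω_n)·(first arrow of ω_0) is not in I_N. -/

import Mathlib

namespace UMPPaper

variable {V A : Type}

/-- A (non-trivial) path in the quiver with source/target maps `s`, `t`,
represented as a nonempty list of composable arrows. -/
def IsPath (s t : A → V) (p : List A) : Prop :=
  p ≠ [] ∧ p.Chain' (fun a b => t a = s b)

/-- `Q` is a cyclic quiver: there is a repetition-free path through all arrows
(and all vertices) whose target equals its source. -/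
def IsCyclicQuiver (s t : A → V) : Prop :=
  ∃ p : List A, IsPath s t p ∧ p.Nodup ∧ (∀ a : A, a ∈ p) ∧
    (∀ v : V, ∃ a ∈ p, s a = v ∨ t a = v) ∧
    (∃ x ∈ p.getLast?, ∃ y ∈ p.head?, t x = s y)

/-- `Φ_a`: paths containing the arrow `a` as a subpath, all of whose
intermediate vertices have exactly one incoming and exactly one outgoing arrow. -/
def Phi (s t : A → V) (a : A) : Set (List A) :=
  {p | IsPath s t p ∧ [a] <:+: p ∧
    ∀ x ∈ p.dropLast, (∃! b : A, s b = t x) ∧ (∃! b : A, t b = t x)}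

/-- Specification of the assignment `a ↦ ω_a`. -/
def OmegaSpec (s t : A → V) (ω : A → List A) : Prop :=
  (IsCyclicQuiver s t → ∃ p : List A, IsPath s t p ∧ p.Nodup ∧ (∀ a : A, a ∈ p) ∧
      (∃ x ∈ p.getLast?, ∃ y ∈ p.head?, t x = s y) ∧ ∀ a : A, ω a = p) ∧
  (¬ IsCyclicQuiver s t →
    ∀ a : A, ω a ∈ Phi s t a ∧ ∀ q ∈ Phi s t a, q.length ≤ (ω a).length)

/-- The quiver is connected (as an undirected graph on vertices). -/
def QConnected (s t : A → V) : Prop :=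
  ∀ u v : V, Relation.ReflTransGen
    (fun x y => ∃ a : A, (s a = x ∧ t a = y) ∨ (s a = y ∧ t a = x)) u v

/-! ## Bound quiver algebras: the ideal `I` is abstracted by the set `Zi` of paths lying in it. -/

/-- The set of paths lying in a (two-sided) ideal is closed under taking super-paths. -/
def ZeroClosed (Zi : List A → Prop) : Prop :=
  ∀ p q : List A, Zi p → p <:+: q → Zi q

/-- Path-level content of admissibility: `I ⊆ R², Rᵐ ⊆ I` for some `m ≥ 2`. -/
def Admissible (s t : A → V) (Zi : List A → Prop) : Prop :=
  (∀ p : List A, Zi p → 2 ≤ p.length) ∧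
  ∃ m : ℕ, 2 ≤ m ∧ ∀ p : List A, IsPath s t p → m ≤ p.length → Zi p

/-- `t(p) = s(q)` and the junction (last arrow of `p`)·(first arrow of `q`) is not in `I`. -/
def JunctionOK (s t : A → V) (Zi : List A → Prop) (p q : List A) : Prop :=
  ∃ x ∈ p.getLast?, ∃ y ∈ q.head?, t x = s y ∧ ¬ Zi [x, y]

/-- Directed edge of the ramifications graph, on path-vertices. -/
def REdgeP (s t : A → V) (Zi : List A → Prop) (p q : List A) : Prop :=
  p ≠ q ∧ JunctionOK s t Zi p q

/-- Directed edge `ω_a → ω_b` of the ramifications graph `G_{Q,I}`. -/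
def REdge (s t : A → V) (Zi : List A → Prop) (ω : A → List A) (a b : A) : Prop :=
  REdgeP s t Zi (ω a) (ω b)

/-- Undirected adjacency (including equality of vertices) used for weak connectivity. -/
def RAdj (s t : A → V) (Zi : List A → Prop) (ω : A → List A) (a b : A) : Prop :=
  ω a = ω b ∨ REdge s t Zi ω a b ∨ REdge s t Zi ω b a

/-- `a` and `b` lie in the same weakly connected component of `G_{Q,I}`. -/
def SameComp (s t : A → V) (Zi : List A → Prop) (ω : A → List A) (a b : A) : Prop :=
  Relation.ReflTransGen (RAdj s t Zi ω) a b

/-- `N` (a set of arrows) is (the arrow set `(Q_N)₁` of) a weakly connected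
component of the ramifications graph `G_{Q,I}`. -/
def IsComp (s t : A → V) (Zi : List A → Prop) (ω : A → List A) (N : Set A) : Prop :=
  ∃ a : A, N = {b | SameComp s t Zi ω a b}

/-- A path of the subquiver `Q_N`. -/
def PathIn (s t : A → V) (N : Set A) (p : List A) : Prop :=
  IsPath s t p ∧ ∀ x ∈ p, x ∈ N

/-- `m` is (a representative of) a maximal path of `A_N = kQ_N/I_N`
(for `N = Set.univ` this is a maximal path of `A = kQ/I`). -/
def MaxPathIn (s t : A → V) (Zi : List A → Prop) (N : Set A) (m : List A) : Prop :=
  PathIn s t N m ∧ ¬ Zi m ∧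
  (∀ α ∈ N, (∃ x ∈ m.getLast?, t x = s α) → Zi (m ++ [α])) ∧
  (∀ α ∈ N, (∃ x ∈ m.head?, t α = s x) → Zi (α :: m))

/-- `A_N` is a UMP algebra: any two non-disjoint maximal paths coincide. -/
def UMPin (s t : A → V) (Zi : List A → Prop) (N : Set A) : Prop :=
  ∀ m m' : List A, MaxPathIn s t Zi N m → MaxPathIn s t Zi N m' →
    (∃ a, a ∈ m ∧ a ∈ m') → m = m'

/-- `A = kQ/I` is special multiserial: every arrow has at most one right and at
most one left arrow-extension outside `I`. -/
def SpecialMultiserial (s t : A → V) (Zi : List A → Prop) : Prop :=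
  ∀ α β γ : A,
    ((t α = s β ∧ ¬ Zi [α, β]) → (t α = s γ ∧ ¬ Zi [α, γ]) → β = γ) ∧
    ((t β = s α ∧ ¬ Zi [β, α]) → (t γ = s α ∧ ¬ Zi [γ, α]) → β = γ)

/-- `ws = [ω_0, …, ω_n]` is the enumeration of the vertices of the component `N`
in edge order; `ω(N) = ws.flatten`. -/
def CompEnum (s t : A → V) (Zi : List A → Prop) (ω : A → List A)
    (N : Set A) (ws : List (List A)) : Prop :=
  ws ≠ [] ∧ ws.Nodup ∧ (∀ p, p ∈ ws ↔ ∃ a ∈ N, ω a = p) ∧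
  ws.Chain' (fun p q => JunctionOK s t Zi p q) ∧ IsPath s t ws.flatten

/-- `W^{(l)}`, the `l`-fold concatenation of `W`. -/
def cyclePow (W : List A) (l : ℕ) : List A := (List.replicate l W).flatten

/-- `R` is a minimal set of zero relations generating `I_N` (so `A_N` is monomial). -/
def MinGen (s t : A → V) (Zi : List A → Prop) (N : Set A) (R : Set (List A)) : Prop :=
  (∀ r ∈ R, PathIn s t N r ∧ Zi r) ∧
  (∀ p, PathIn s t N p → (Zi p ↔ ∃ r ∈ R, r <:+: p)) ∧
  (∀ r ∈ R, ∀ r' ∈ R, r <:+: r' → r = r')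

/-- `r` is a quadratic junction relation `ω_a^{l_a} ω_b^0` with `a, b ∈ (Q_N)₁`. -/
def IsJuncRel (ω : A → List A) (N : Set A) (r : List A) : Prop :=
  ∃ a ∈ N, ∃ b ∈ N, ∃ x ∈ (ω a).getLast?, ∃ y ∈ (ω b).head?, r = [x, y]

/-- `S_N = R_N \ Ω_N`. -/
def SRel (ω : A → List A) (N : Set A) (R : Set (List A)) : Set (List A) :=
  {r ∈ R | ¬ IsJuncRel ω N r}

/-- The order `≤_f` on arrows given by position along `W = ω(N)`. -/
def leF (W : List A) (α β : A) : Prop :=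
  ∃ u u' : List A, W = u ++ α :: u' ∧ β ∈ α :: u'

/-- The order `≤_s` on relations: comparison of first arrows. -/
def leS (W : List A) (u v : List A) : Prop :=
  ∃ x ∈ u.head?, ∃ y ∈ v.head?, leF W x y

/-- `ss = [s_1, …, s_k]` enumerates `S` in strictly increasing `≤_s` order. -/
def SEnum (W : List A) (S : Set (List A)) (ss : List (List A)) : Prop :=
  ss.Nodup ∧ (∀ r, r ∈ ss ↔ r ∈ S) ∧ ss.Chain' (fun u v => leS W u v ∧ u ≠ v)

/-- `m` is one of the paths `m_i`, `0 ≤ i ≤ k`, of the definition of `S_N^*`.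
Note that `ω_n^{l_n} ω_0^0 ∈ I_N` is expressed by `¬ JunctionOK s t Zi W W`. -/
def IsMi (s t : A → V) (Zi : List A → Prop) (W : List A)
    (ss : List (List A)) (m : List A) : Prop :=
  -- case `0 < i < k`
  (∃ p ∈ ss.zip ss.tail, ∃ u v v' : List A, ∃ x ∈ p.1.head?, ∃ y ∈ p.2.head?,
      W = u ++ [x] ++ v ++ [y] ++ v' ∧ m = v ++ p.2.dropLast) ∨
  -- case `i = 0`, `ω_n^{l_n} ω_0^0 ∈ I_N`
  (¬ JunctionOK s t Zi W W ∧
    ∃ s1 ∈ ss.head?, ∃ u z : List A, W = u ++ s1 ++ z ∧ m = u ++ s1.dropLast) ∨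
  -- case `i = k`, `ω_n^{l_n} ω_0^0 ∈ I_N`
  (¬ JunctionOK s t Zi W W ∧
    ∃ sk ∈ ss.getLast?, ∃ v z : List A, W = z ++ sk ++ v ∧ m = sk.tail ++ v) ∨
  -- case `i ∈ {0, k}`, `ω_n^{l_n} ω_0^0 ∉ I_N`
  (JunctionOK s t Zi W W ∧
    ∃ s1 ∈ ss.head?, ∃ sk ∈ ss.getLast?, ∃ u v z z' : List A,
      ∃ x ∈ s1.head?, ∃ y ∈ sk.head?,
      W = u ++ [x] ++ z ∧ W = z' ++ [y] ++ v ∧ m = v ++ u ++ s1.dropLast)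

/-- `r` is an `ω`-relation: a zero relation of length greater than two which is the
unique element of `I` dividing it. -/
def IsOmegaRel (s t : A → V) (Zi : List A → Prop) (r : List A) : Prop :=
  IsPath s t r ∧ Zi r ∧ 3 ≤ r.length ∧ ∀ r' : List A, Zi r' → r' <:+: r → r' = r


/-!
Write `W = ω(N)`. Special multiseriality makes the nonzero length-two paths functional in both
directions, so a path of `Q_N` without zero quadratic subpath just runs along `W`; and since
`S_N = {s1}`, such a path lies in `I_N` exactly when it passes through `s1`. (That `W` has no
repeated arrow and no zero quadratic subpath comes from the maximality defining the `ω_a` and from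
the quadratic relations of `I_N` being junctions.)

If `ω_n^{l_n} ω_0^0 ∈ I_N`, paths run along `W` as along a line. Writing `s1 = x·mid·y`, the
paths from the start of `W` to just before `y` and from just after `x` to the end of `W` are both
maximal; they are distinct and share `mid`, which is nonempty as `σ_1 > 1`.

Otherwise `W` closes up into a cycle of length `n`, and every maximal path is the stretch of
length `n + σ_1 - 1` starting right after the first arrow of an occurrence of `s1`: its one-arrow
extensions must end, resp. start, with `s1`, while it does not contain `s1` itself. So there is
only one maximal path.
-/

section RelationAlongList

variable {α : Type*} {R : α → α → Prop} {W : List α}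

theorem _root_.List.exists_getElem_of_mem_getLast? {x : α} (hx : x ∈ W.getLast?) :
    ∃ h : W.length - 1 < W.length, W[W.length - 1] = x := by
  rw [List.getLast?_eq_getElem?] at hx
  exact List.getElem?_eq_some_iff.1 hx

theorem _root_.List.exists_getElem_of_mem_head? {x : α} (hx : x ∈ W.head?) :
    ∃ h : 0 < W.length, W[0] = x := by
  rw [List.head?_eq_getElem?] at hx
  exact List.getElem?_eq_some_iff.1 hx

theorem eq_succ_or_wrap_of_rel_getElem (hR : Relator.RightUnique R) (hL : Relator.LeftUnique R)
    (hW : W.IsChain R) (hnd : W.Nodup) {i j : ℕ} (hi : i < W.length) (hj : j < W.length)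
    (h : R W[i] W[j]) : j = i + 1 ∨ (i + 1 = W.length ∧ j = 0) := by
  rcases Nat.lt_or_ge (i + 1) W.length with hi1 | hi1
  · exact .inl (hnd.getElem_inj_iff.1 (hR h (List.isChain_iff_getElem.1 hW i hi1)))
  · refine .inr ⟨by omega, Nat.eq_zero_of_not_pos fun hj0 => ?_⟩
    have hstep := List.isChain_iff_getElem.1 hW (j - 1) (by omega)
    simp only [Nat.sub_add_cancel hj0] at hstep
    have := hnd.getElem_inj_iff.1 (hL hstep h)
    omega

section Linear

variable (hR : Relator.RightUnique R) (hL : Relator.LeftUnique R) (hW : W.IsChain R)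
  (hnd : W.Nodup) (hend : ¬ ∃ x ∈ W.getLast?, ∃ y ∈ W.head?, R x y)
include hR hL hW hnd hend

theorem not_rel_of_mem_getLast? {x y : α} (hx : x ∈ W.getLast?) (hy : y ∈ W) : ¬ R x y := by
  intro hxy
  obtain ⟨hi, rfl⟩ := List.exists_getElem_of_mem_getLast? hx
  obtain ⟨j, hj, rfl⟩ := List.mem_iff_getElem.1 hy
  rcases eq_succ_or_wrap_of_rel_getElem hR hL hW hnd hi hj hxy with h | ⟨-, rfl⟩
  · omega
  · exact hend ⟨_, hx, _, by simp [List.head?_eq_getElem?, hj], hxy⟩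

theorem not_rel_of_mem_head? {x y : α} (hx : x ∈ W) (hy : y ∈ W.head?) : ¬ R x y := by
  intro hxy
  obtain ⟨i, hi, rfl⟩ := List.mem_iff_getElem.1 hx
  obtain ⟨hj, rfl⟩ := List.exists_getElem_of_mem_head? hy
  rcases eq_succ_or_wrap_of_rel_getElem hR hL hW hnd hi hj hxy with h | ⟨h, -⟩
  · omega
  · exact hend ⟨_, by simp [List.getLast?_eq_getElem?, ← h], _, hy, hxy⟩

theorem infix_of_isChain {q : List α} (hq : q.IsChain R) (hne : q ≠ []) (hqW : ∀ x ∈ q, x ∈ W) :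
    q <:+: W := by
  induction q with
  | nil => exact absurd rfl hne
  | cons x q ih =>
    rcases q with _ | ⟨y, q⟩
    · exact (List.singleton_infix_iff _ _).2 (hqW x (by simp))
    obtain ⟨hxy, hq⟩ := List.isChain_cons_cons.1 hq
    obtain ⟨a, b, hab⟩ := ih hq (by simp) fun z hz => hqW z (by simp [hz])
    rcases List.eq_nil_or_concat' a with rfl | ⟨a, z, rfl⟩
    · exact absurd hxy (not_rel_of_mem_head? hR hL hW hnd hend (hqW x (by simp)) (by simp [← hab]))
    · have hzy : R z y := List.isChain_iff_forall_rel_of_append_cons_cons.1 hW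
        (by simp [← hab] : W = a ++ z :: y :: (q ++ b))
      obtain rfl := hL hzy hxy
      exact ⟨a, b, by simp [← hab]⟩

end Linear

theorem exists_periodic_of_isChain (hW : W.IsChain R) (hnd : W.Nodup)
    (hwrap : ∃ x ∈ W.getLast?, ∃ y ∈ W.head?, R x y) :
    ∃ w : ℕ → α, (∀ a b, w a = w b ↔ a ≡ b [MOD W.length]) ∧ (∀ k, R (w k) (w (k + 1))) ∧
      ∀ x, x ∈ W ↔ ∃ k, w k = x := by
  obtain ⟨x, hx, y, hy, hxy⟩ := hwrap
  obtain ⟨hn, rfl⟩ := List.exists_getElem_of_mem_head? hy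
  obtain ⟨hlast, rfl⟩ := List.exists_getElem_of_mem_getLast? hx
  refine ⟨fun k => W[k % W.length]'(Nat.mod_lt _ hn), fun a b => hnd.getElem_inj_iff,
    fun k => ?_, fun x => ⟨fun hx => ?_, ?_⟩⟩
  · rcases Nat.lt_or_ge (k % W.length + 1) W.length with hk | hk
    · have e : (k + 1) % W.length = k % W.length + 1 := by
        rw [← Nat.mod_add_mod, Nat.mod_eq_of_lt hk]
      simp only [e]
      exact List.isChain_iff_getElem.1 hW _ hk
    · have e1 : k % W.length = W.length - 1 := by have := Nat.mod_lt k hn; omega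
      have e2 : (k + 1) % W.length = 0 := by
        rw [← Nat.mod_add_mod, e1, Nat.sub_add_cancel hn, Nat.mod_self]
      simp only [e1, e2]
      exact hxy
  · obtain ⟨i, hi, rfl⟩ := List.mem_iff_getElem.1 hx
    exact ⟨i, by simp only [Nat.mod_eq_of_lt hi]⟩
  · rintro ⟨k, rfl⟩
    exact List.getElem_mem _

end RelationAlongList

section PeriodicWord

variable {α : Type*} {w : ℕ → α} {n : ℕ}

theorem map_range'_eq_of_modEq (hw : ∀ a b, w a = w b ↔ a ≡ b [MOD n]) {a b : ℕ}
    (h : a ≡ b [MOD n]) (l : ℕ) : (List.range' a l).map w = (List.range' b l).map w := by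
  induction l generalizing a b with
  | zero => rfl
  | succ l ih => simp only [List.range'_succ, List.map_cons, (hw a b).2 h, ih (h.add_right 1)]

theorem eq_map_range'_of_isChain {R : α → α → Prop} (hR : Relator.RightUnique R)
    (hstep : ∀ k, R (w k) (w (k + 1))) {q : List α} (hq : q.IsChain R) {i : ℕ}
    (hi : q.head? = some (w i)) : q = (List.range' i q.length).map w := by
  induction q generalizing i with
  | nil => rfl
  | cons x q ih =>
    obtain rfl : x = w i := by simpa using hi
    rcases q with _ | ⟨y, q⟩
    · rfl
    obtain ⟨hxy, hq⟩ := List.isChain_cons_cons.1 hq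
    obtain rfl := hR hxy (hstep i)
    rw [List.length_cons, List.range'_succ, List.map_cons, ← ih hq rfl]

theorem isChain_map_range' {R : α → α → Prop} (hstep : ∀ k, R (w k) (w (k + 1))) (i l : ℕ) :
    ((List.range' i l).map w).IsChain R :=
  (List.isChain_map w).2 ((List.isChain_range' i l 1).imp fun a b (h : b = a + 1) => h ▸ hstep a)

theorem map_range'_infix {i j k l : ℕ} (hij : i ≤ j) (hkl : j + k ≤ i + l) :
    (List.range' j k).map w <:+: (List.range' i l).map w := by
  obtain ⟨d, rfl⟩ := Nat.exists_eq_add_of_le hij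
  obtain ⟨e, rfl⟩ : ∃ e, l = d + k + e := ⟨l - d - k, by omega⟩
  refine ⟨(List.range' i d).map w, (List.range' (i + d + k) e).map w, ?_⟩
  simp only [← List.map_append, List.range'_append_1, Nat.add_assoc]

theorem modEq_of_map_range'_prefix (hw : ∀ a b, w a = w b ↔ a ≡ b [MOD n]) {a b k l : ℕ}
    (hk : 0 < k) (h : (List.range' a k).map w <+: (List.range' b l).map w) : a ≡ b [MOD n] := by
  obtain ⟨k, rfl⟩ := Nat.exists_eq_add_of_lt hk
  obtain ⟨u, hu⟩ := h
  rcases l with _ | l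
  · simp at hu
  · simp only [List.range'_succ, List.map_cons, List.cons_append, List.cons.injEq] at hu
    exact (hw a b).1 hu.1

theorem modEq_of_map_range'_suffix (hw : ∀ a b, w a = w b ↔ a ≡ b [MOD n]) {a b k l : ℕ}
    (hk : 0 < k) (h : (List.range' a k).map w <:+ (List.range' b l).map w) :
    k ≤ l ∧ a ≡ b + (l - k) [MOD n] := by
  have hkl : k ≤ l := by simpa using h.length_le
  have hdrop : (List.range' a k).map w = (List.range' (b + (l - k)) k).map w := by
    rw [List.suffix_iff_eq_drop.1 h]
    simp [← List.map_drop, List.drop_range', Nat.sub_sub_self hkl]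
  exact ⟨hkl, modEq_of_map_range'_prefix hw hk (l := k) (by rw [hdrop])⟩

end PeriodicWord

section Lists

variable {α : Type*}

theorem exists_eq_append_cons_append_cons_of_not_nodup {l : List α} (h : ¬ l.Nodup) :
    ∃ u x v r, l = u ++ x :: v ++ x :: r := by
  obtain ⟨x, hx⟩ := List.exists_duplicate_iff_not_nodup.2 h
  obtain ⟨r₁, r₂, rfl, h₁, h₂⟩ := List.cons_sublist_iff.1 (List.duplicate_iff_sublist.1 hx)
  obtain ⟨u, v, rfl⟩ := List.append_of_mem h₁
  obtain ⟨v', r, rfl⟩ := List.append_of_mem (List.singleton_sublist.1 h₂)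
  exact ⟨u, x, v ++ v', r, by simp⟩

theorem _root_.List.IsChain.pump {R : α → α → Prop} {u v r : List α} {x : α}
    (h : (u ++ x :: v ++ x :: r).IsChain R) : (u ++ x :: v ++ x :: v ++ x :: r).IsChain R := by
  obtain ⟨h₁, h₂, h₁₂⟩ := List.isChain_append.1 h
  refine List.isChain_append.2
    ⟨List.isChain_append.2 ⟨h₁, h₁.infix (List.suffix_append _ _).isInfix, h₁₂⟩, h₂, ?_⟩
  rwa [List.getLast?_append_of_ne_nil _ (List.cons_ne_nil x v),
    ← List.getLast?_append_of_ne_nil u (List.cons_ne_nil x v)]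

theorem mem_dropLast_of_eq_append {l u v : List α} {x y : α} (h : l = u ++ x :: y :: v) :
    x ∈ l.dropLast := by
  subst h
  simp [List.dropLast_append_of_ne_nil]

theorem not_mem_getLast?_of_nodup {u v : List α} {x y : α} (h : (u ++ x :: y :: v).Nodup) :
    x ∉ (u ++ x :: y :: v).getLast? := by
  intro hx
  rw [List.getLast?_append_of_ne_nil _ (List.cons_ne_nil _ _), List.getLast?_cons_cons] at hx
  simp only [List.nodup_append, List.nodup_cons] at h
  exact h.2.1.1 (List.mem_of_mem_getLast? hx)

end Lists


def NonzeroStep (s t : A → V) (Zi : List A → Prop) (x y : A) : Prop :=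
  t x = s y ∧ ¬ Zi [x, y]

/-- What `S_N = {s1}` amounts to on the paths of `Q_N` without quadratic subpaths in `I`. -/
def SoleRelation (s t : A → V) (Zi : List A → Prop) (N : Set A) (s1 : List A) : Prop :=
  ∀ p, PathIn s t N p → p.IsChain (NonzeroStep s t Zi) → (Zi p ↔ s1 <:+: p)

section MaximalPaths

variable {s t : A → V} {Zi : List A → Prop} {N : Set A} {s1 m : List A} {α : A}

theorem SpecialMultiserial.rightUnique (hsm : SpecialMultiserial s t Zi) :
    Relator.RightUnique (NonzeroStep s t Zi) :=
  fun a _ _ hb hc => (hsm a _ _).1 hb hc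

theorem SpecialMultiserial.leftUnique (hsm : SpecialMultiserial s t Zi) :
    Relator.LeftUnique (NonzeroStep s t Zi) :=
  fun _ _ c ha hb => (hsm c _ _).2 ha hb

theorem pathIn_of_isChain (hp : m.IsChain (NonzeroStep s t Zi)) (hne : m ≠ [])
    (hN : ∀ x ∈ m, x ∈ N) : PathIn s t N m :=
  ⟨⟨hne, hp.imp fun _ _ h => h.1⟩, hN⟩

theorem MaxPathIn.isChain (hZ : ZeroClosed Zi) (hm : MaxPathIn s t Zi N m) :
    m.IsChain (NonzeroStep s t Zi) :=
  List.isChain_iff_forall_rel_of_append_cons_cons.2 fun _ _ u v h =>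
    ⟨List.isChain_iff_forall_rel_of_append_cons_cons.1 hm.1.1.2 h,
      fun hz => hm.2.1 (hZ _ _ hz ⟨u, v, by simp [h]⟩)⟩

theorem maxPathIn_of_nonzeroStep (hZ : ZeroClosed Zi) (hm : PathIn s t N m) (hnz : ¬ Zi m)
    (hright : ∀ α ∈ N, ∀ x ∈ m.getLast?, NonzeroStep s t Zi x α → Zi (m ++ [α]))
    (hleft : ∀ α ∈ N, ∀ x ∈ m.head?, NonzeroStep s t Zi α x → Zi (α :: m)) :
    MaxPathIn s t Zi N m := by
  refine ⟨hm, hnz, fun α hα ⟨x, hx, hxα⟩ => ?_, fun α hα ⟨x, hx, hαx⟩ => ?_⟩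
  · by_cases hz : Zi [x, α]
    · obtain ⟨m', rfl⟩ := List.getLast?_eq_some_iff.1 hx
      exact hZ _ _ hz ⟨m', [], by simp⟩
    · exact hright α hα x hx ⟨hxα, hz⟩
  · by_cases hz : Zi [α, x]
    · obtain ⟨m', rfl⟩ := List.head?_eq_some_iff.1 hx
      exact hZ _ _ hz ⟨[], m', by simp⟩
    · exact hleft α hα x hx ⟨hαx, hz⟩

theorem MaxPathIn.suffix_of_isChain (hZ : ZeroClosed Zi) (hsole : SoleRelation s t Zi N s1)
    (hm : MaxPathIn s t Zi N m) (hα : α ∈ N) (hc : (m ++ [α]).IsChain (NonzeroStep s t Zi)) :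
    s1 <:+ m ++ [α] := by
  have hx := List.getLast?_eq_some_getLast hm.1.1.1
  have hz : Zi (m ++ [α]) := hm.2.2.1 α hα ⟨_, hx, ((List.isChain_append.1 hc).2.2 _ hx α rfl).1⟩
  have hp : PathIn s t N (m ++ [α]) :=
    pathIn_of_isChain hc (by simp) (by simpa [or_imp, forall_and] using ⟨hm.1.2, hα⟩)
  refine (List.infix_concat_iff.1 ((hsole _ hp hc).1 hz)).resolve_right fun h => hm.2.1 ?_
  exact (hsole m hm.1 (hm.isChain hZ)).2 h

theorem MaxPathIn.prefix_of_isChain (hZ : ZeroClosed Zi) (hsole : SoleRelation s t Zi N s1)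
    (hm : MaxPathIn s t Zi N m) (hα : α ∈ N) (hc : (α :: m).IsChain (NonzeroStep s t Zi)) :
    s1 <+: α :: m := by
  have hx := List.head?_eq_some_head hm.1.1.1
  have hz : Zi (α :: m) := hm.2.2.2 α hα ⟨_, hx, ((List.isChain_cons.1 hc).1 _ hx).1⟩
  have hp : PathIn s t N (α :: m) := pathIn_of_isChain hc (by simp) (by simpa using ⟨hα, hm.1.2⟩)
  refine (List.infix_cons_iff.1 ((hsole _ hp hc).1 hz)).resolve_right fun h => hm.2.1 ?_
  exact (hsole m hm.1 (hm.isChain hZ)).2 h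

end MaximalPaths

/-- `W` plays the role of `ω(N)`, and `s1` that of the only relation in `S_N`. -/
structure SingleRelationComponent (s t : A → V) (Zi : List A → Prop) (N : Set A)
    (W s1 : List A) : Prop where
  isChain : W.IsChain (NonzeroStep s t Zi)
  nodup : W.Nodup
  mem_iff : ∀ a, a ∈ N ↔ a ∈ W
  sole : SoleRelation s t Zi N s1
  isChain_s1 : s1.IsChain (NonzeroStep s t Zi)
  subset_s1 : ∀ x ∈ s1, x ∈ W

namespace SingleRelationComponent

variable {s t : A → V} {Zi : List A → Prop} {N : Set A} {W s1 p : List A}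

theorem pathIn_of_infix (hC : SingleRelationComponent s t Zi N W s1) (hp : p <:+: W)
    (hne : p ≠ []) : PathIn s t N p :=
  pathIn_of_isChain (hC.isChain.infix hp) hne fun x hx => (hC.mem_iff x).2 (hp.subset hx)

theorem zi_iff_of_infix (hC : SingleRelationComponent s t Zi N W s1) (hp : p <:+: W)
    (hne : p ≠ []) : Zi p ↔ s1 <:+: p :=
  hC.sole p (hC.pathIn_of_infix hp hne) (hC.isChain.infix hp)

section Linear

variable {a b mid : List A} {x y : A}

theorem maxPathIn_before (hZ : ZeroClosed Zi) (hsm : SpecialMultiserial s t Zi)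
    (hC : SingleRelationComponent s t Zi N W s1) (hend : ¬ JunctionOK s t Zi W W)
    (hW : W = a ++ x :: mid ++ y :: b) (hs1 : s1 = x :: mid ++ [y]) :
    MaxPathIn s t Zi N (a ++ x :: mid) := by
  subst hW hs1
  have hinf : a ++ x :: mid <:+: a ++ x :: mid ++ y :: b := (List.prefix_append _ _).isInfix
  refine maxPathIn_of_nonzeroStep hZ (hC.pathIn_of_infix hinf (by simp)) ?_ ?_ ?_
  · rw [hC.zi_iff_of_infix hinf (by simp)]
    intro h
    exact List.disjoint_of_nodup_append hC.nodup (h.subset (by simp)) List.mem_cons_self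
  · intro α _ z hz hzα
    have hzy : NonzeroStep s t Zi z y := (List.isChain_append.1 hC.isChain).2.2 z hz y rfl
    obtain rfl := hsm.rightUnique hzα hzy
    rw [hC.zi_iff_of_infix ⟨[], b, by simp⟩ (by simp)]
    exact ⟨a, [], by simp⟩
  · intro α hα z hz hαz
    refine absurd hαz (not_rel_of_mem_head? hsm.rightUnique hsm.leftUnique hC.isChain hC.nodup
      hend ((hC.mem_iff α).1 hα) ?_)
    rwa [List.head?_append_of_ne_nil _ (by simp)]

theorem maxPathIn_after (hZ : ZeroClosed Zi) (hsm : SpecialMultiserial s t Zi)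
    (hC : SingleRelationComponent s t Zi N W s1) (hend : ¬ JunctionOK s t Zi W W)
    (hW : W = a ++ x :: mid ++ y :: b) (hs1 : s1 = x :: mid ++ [y]) :
    MaxPathIn s t Zi N (mid ++ y :: b) := by
  subst hs1
  have hW' : W = (a ++ [x]) ++ (mid ++ y :: b) := by simp [hW]
  have hinf : mid ++ y :: b <:+: W := hW' ▸ (List.suffix_append _ _).isInfix
  refine maxPathIn_of_nonzeroStep hZ (hC.pathIn_of_infix hinf (by simp)) ?_ ?_ ?_
  · rw [hC.zi_iff_of_infix hinf (by simp)]
    intro h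
    rw [hW'] at hC
    exact List.disjoint_of_nodup_append hC.nodup (a := x) (by simp) (h.subset (by simp))
  · intro α hα z hz hzα
    refine absurd hzα (not_rel_of_mem_getLast? hsm.rightUnique hsm.leftUnique hC.isChain
      hC.nodup hend ?_ ((hC.mem_iff α).1 hα))
    rwa [hW', List.getLast?_append_of_ne_nil _ (by simp)]
  · intro α _ z hz hαz
    have hxz : NonzeroStep s t Zi x z := by
      rw [hW'] at hC
      exact (List.isChain_append.1 hC.isChain).2.2 x (by simp) z hz
    obtain rfl := hsm.leftUnique hαz hxz
    rw [hC.zi_iff_of_infix (by rw [hW]; exact ⟨a, [], by simp⟩) (by simp)]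
    exact ⟨[], b, by simp⟩

end Linear

theorem not_umpIn (hZ : ZeroClosed Zi) (hsm : SpecialMultiserial s t Zi)
    (hC : SingleRelationComponent s t Zi N W s1) (hlen : 3 ≤ s1.length)
    (hend : ¬ JunctionOK s t Zi W W) : ¬ UMPin s t Zi N := by
  obtain ⟨x, r, rfl⟩ := List.exists_cons_of_length_pos (by omega : 0 < s1.length)
  obtain ⟨mid, y, rfl⟩ := (List.eq_nil_or_concat' r).resolve_left (by rintro rfl; simp at hlen)
  obtain ⟨c, mid, rfl⟩ := List.exists_cons_of_ne_nil (by rintro rfl; simp at hlen : mid ≠ [])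
  obtain ⟨a, b, hab⟩ := infix_of_isChain hsm.rightUnique hsm.leftUnique hC.isChain hC.nodup hend
    hC.isChain_s1 (by simp) hC.subset_s1
  have hW : W = a ++ x :: c :: mid ++ y :: b := by simp [← hab]
  intro hU
  have heq := hU _ _ (hC.maxPathIn_before hZ hsm hend hW rfl)
    (hC.maxPathIn_after hZ hsm hend hW rfl) ⟨c, by simp, by simp⟩
  have hx : x ∈ c :: mid ++ y :: b := heq ▸ by simp
  have hnd : (a ++ [x] ++ (c :: mid ++ y :: b)).Nodup := by simpa [hW] using hC.nodup
  exact List.disjoint_of_nodup_append hnd (by simp) hx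

end SingleRelationComponent

theorem add_sub_one_add_one_modEq {n : ℕ} (hn : 0 < n) (i : ℕ) : i + n - 1 + 1 ≡ i [MOD n] := by
  rw [Nat.sub_add_cancel (by omega)]
  exact Nat.add_modulus_modEq_iff.2 rfl

theorem eq_sub_two_of_modEq {n i i0 L l : ℕ} (hn : 0 < n) (hleft : i0 ≡ i + n - 1 [MOD n])
    (hright : i0 ≡ i + (L + 1 - l) [MOD n]) (hl : l ≤ L + 1) (hlt : L + 1 < n + l) :
    L = n + l - 2 := by
  have h : L + 1 - l ≡ n - 1 [MOD n] :=
    Nat.ModEq.add_left_cancel' i (by rw [← Nat.add_sub_assoc hn]; exact hright.symm.trans hleft)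
  rw [Nat.ModEq, Nat.mod_eq_of_lt (by omega), Nat.mod_eq_of_lt (by omega)] at h
  omega

section Cyclic

variable {s t : A → V} {Zi : List A → Prop} {N : Set A} {s1 q : List A} {n : ℕ} {w : ℕ → A}

theorem eq_of_maxPathIn_of_periodic (hZ : ZeroClosed Zi) (hsm : SpecialMultiserial s t Zi)
    (hsole : SoleRelation s t Zi N s1) (hn : 0 < n) (hw : ∀ a b, w a = w b ↔ a ≡ b [MOD n])
    (hstep : ∀ k, NonzeroStep s t Zi (w k) (w (k + 1))) (hN : ∀ x, x ∈ N ↔ ∃ k, w k = x)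
    {i0 : ℕ} (hs1 : s1 = (List.range' i0 s1.length).map w) (hs1ne : s1 ≠ [])
    (hq : MaxPathIn s t Zi N q) : q = (List.range' (i0 + 1) (n + s1.length - 2)).map w := by
  have hqc := hq.isChain hZ
  obtain ⟨i, hi⟩ : ∃ i, q.head? = some (w i) := by
    obtain ⟨i, hi⟩ := (hN _).1 (hq.1.2 _ (List.head_mem hq.1.1.1))
    exact ⟨i, by rw [hi]; exact List.head?_eq_some_head _⟩
  have hqw := eq_map_range'_of_isChain hsm.rightUnique hstep hqc hi
  set L := q.length
  have hsuf : s1 <:+ (List.range' i (L + 1)).map w := by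
    have hext : (List.range' i (L + 1)).map w = q ++ [w (i + L)] := by
      rw [List.range'_concat, List.map_append, ← hqw, Nat.one_mul, List.map_singleton]
    rw [hext]
    exact hq.suffix_of_isChain hZ hsole ((hN _).2 ⟨_, rfl⟩)
      (hext ▸ isChain_map_range' hstep i (L + 1))
  have hpre : s1 <+: (List.range' (i + n - 1) (L + 1)).map w := by
    have hext : (List.range' (i + n - 1) (L + 1)).map w = w (i + n - 1) :: q := by
      rw [List.range'_succ, List.map_cons, hqw,
        map_range'_eq_of_modEq hw (add_sub_one_add_one_modEq hn i)]
    rw [hext]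
    exact hq.prefix_of_isChain hZ hsole ((hN _).2 ⟨_, rfl⟩)
      (hext ▸ isChain_map_range' hstep (i + n - 1) (L + 1))
  have hl : 0 < s1.length := List.length_pos_iff.2 hs1ne
  rw [hs1] at hsuf hpre
  obtain ⟨hlL, hright⟩ := modEq_of_map_range'_suffix hw hl hsuf
  have hleft := modEq_of_map_range'_prefix hw hl hpre
  have hlt : L + 1 < n + s1.length := by
    by_contra hge
    refine hq.2.1 ((hsole q hq.1 hqc).2 ?_)
    rw [hs1, map_range'_eq_of_modEq hw hleft, hqw]
    exact map_range'_infix (by omega) (by omega)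
  rw [hqw, ← eq_sub_two_of_modEq hn hleft hright hlL hlt]
  exact map_range'_eq_of_modEq hw
    ((hleft.add_right 1).trans (add_sub_one_add_one_modEq hn i)).symm L

theorem SingleRelationComponent.umpIn {W : List A} (hZ : ZeroClosed Zi)
    (hsm : SpecialMultiserial s t Zi) (hC : SingleRelationComponent s t Zi N W s1)
    (hs1 : s1 ≠ []) (hJ : JunctionOK s t Zi W W) : UMPin s t Zi N := by
  obtain ⟨w, hw, hstep, hWw⟩ := exists_periodic_of_isChain hC.isChain hC.nodup hJ
  have hn : 0 < W.length := by
    obtain ⟨x, hx, -⟩ := hJ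
    exact List.length_pos_of_mem (List.mem_of_mem_getLast? hx)
  have hN : ∀ x, x ∈ N ↔ ∃ k, w k = x := fun x => (hC.mem_iff x).trans (hWw x)
  obtain ⟨i0, hi0⟩ := (hWw _).1 (hC.subset_s1 _ (List.head_mem hs1))
  have hs1w := eq_map_range'_of_isChain hsm.rightUnique hstep hC.isChain_s1 (i := i0)
    (by rw [hi0]; exact List.head?_eq_some_head _)
  intro m m' hm hm' _
  rw [eq_of_maxPathIn_of_periodic hZ hsm hC.sole hn hw hstep hN hs1w hs1 hm,
    eq_of_maxPathIn_of_periodic hZ hsm hC.sole hn hw hstep hN hs1w hs1 hm']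

end Cyclic

section Phi

variable {s t : A → V} {ω : A → List A} {a b c d : A} {p u v : List A}

theorem through_of_mem_Phi (hp : p ∈ Phi s t a) (h : p = u ++ c :: d :: v) :
    (∃! b, s b = t c) ∧ (∃! b, t b = t c) :=
  hp.2.2 c (mem_dropLast_of_eq_append h)

theorem target_eq_source_of_mem_Phi (hp : p ∈ Phi s t a) (h : p = u ++ c :: d :: v) :
    t c = s d :=
  List.isChain_iff_forall_rel_of_append_cons_cons.1 hp.1.2 h

theorem append_mem_Phi (hp : p ∈ Phi s t a) (hc : p.getLast? = some c)
    (hthrough : (∃! b, s b = t c) ∧ (∃! b, t b = t c)) (hcd : t c = s d) :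
    p ++ [d] ∈ Phi s t a := by
  obtain ⟨⟨-, hch⟩, ha, hin⟩ := hp
  obtain ⟨p, rfl⟩ := List.getLast?_eq_some_iff.1 hc
  refine ⟨⟨by simp, List.isChain_append.2 ⟨hch, List.isChain_singleton d, ?_⟩⟩,
    ha.trans (List.prefix_append _ _).isInfix, ?_⟩
  · simpa using hcd
  · intro x hx
    rw [List.dropLast_concat, List.mem_append, List.mem_singleton] at hx
    rcases hx with hx | rfl
    · exact hin x (by simpa using hx)
    · exact hthrough

theorem cons_mem_Phi (hp : p ∈ Phi s t a) (hc : p.head? = some c)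
    (hthrough : (∃! b, s b = t d) ∧ (∃! b, t b = t d)) (hdc : t d = s c) :
    d :: p ∈ Phi s t a := by
  obtain ⟨⟨hne, hch⟩, ha, hin⟩ := hp
  obtain ⟨p, rfl⟩ := List.head?_eq_some_iff.1 hc
  refine ⟨⟨by simp, List.isChain_cons_cons.2 ⟨hdc, hch⟩⟩,
    ha.trans (List.suffix_cons _ _).isInfix, ?_⟩
  intro x hx
  rw [List.dropLast_cons_of_ne_nil hne, List.mem_cons] at hx
  rcases hx with rfl | hx
  · exact hthrough
  · exact hin x hx

variable (hΦ : ∀ a, ω a ∈ Phi s t a ∧ ∀ q ∈ Phi s t a, q.length ≤ (ω a).length)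
include hΦ

theorem getLast?_omega_ne (hb : ω b = u ++ c :: d :: v) : (ω a).getLast? ≠ some c := by
  intro hc
  have hlen := (hΦ a).2 _ (append_mem_Phi (hΦ a).1 hc (through_of_mem_Phi (hΦ b).1 hb)
    (target_eq_source_of_mem_Phi (hΦ b).1 hb))
  simp at hlen

theorem head?_omega_ne (hb : ω b = u ++ d :: c :: v) : (ω a).head? ≠ some c := by
  intro hc
  have hlen := (hΦ a).2 _ (cons_mem_Phi (hΦ a).1 hc (through_of_mem_Phi (hΦ b).1 hb)
    (target_eq_source_of_mem_Phi (hΦ b).1 hb))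
  simp at hlen

theorem omega_tails_eq {u₁ u₂ v₁ v₂ : List A} (h₁ : ω a = u₁ ++ c :: v₁)
    (h₂ : ω b = u₂ ++ c :: v₂) : v₁ = v₂ := by
  induction v₁ generalizing u₁ u₂ v₂ c with
  | nil =>
    rcases v₂ with _ | ⟨d, v₂⟩
    · rfl
    · exact absurd (by simp [h₁] : (ω a).getLast? = some c) (getLast?_omega_ne hΦ h₂)
  | cons d₁ v₁ ih =>
    rcases v₂ with _ | ⟨d₂, v₂⟩
    · exact absurd (by simp [h₂] : (ω b).getLast? = some c) (getLast?_omega_ne hΦ h₁)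
    obtain rfl : d₁ = d₂ := (through_of_mem_Phi (hΦ a).1 h₁).1.unique
      (target_eq_source_of_mem_Phi (hΦ a).1 h₁).symm (target_eq_source_of_mem_Phi (hΦ b).1 h₂).symm
    have h₁' : ω a = (u₁ ++ [c]) ++ d₁ :: v₁ := by simp [h₁]
    have h₂' : ω b = (u₂ ++ [c]) ++ d₁ :: v₂ := by simp [h₂]
    rw [ih h₁' h₂']

theorem omega_heads_eq {u₁ u₂ v₁ v₂ : List A} (h₁ : ω a = u₁ ++ c :: v₁)
    (h₂ : ω b = u₂ ++ c :: v₂) : u₁ = u₂ := by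
  induction u₁ using List.reverseRecOn generalizing u₂ v₁ v₂ c with
  | nil =>
    rcases List.eq_nil_or_concat' u₂ with rfl | ⟨u₂, e, rfl⟩
    · rfl
    · have h₂' : ω b = u₂ ++ e :: c :: v₂ := by simp [h₂]
      exact absurd (by simp [h₁] : (ω a).head? = some c) (head?_omega_ne hΦ h₂')
  | append_singleton u₁ e₁ ih =>
    have h₁' : ω a = u₁ ++ e₁ :: c :: v₁ := by simp [h₁]
    rcases List.eq_nil_or_concat' u₂ with rfl | ⟨u₂, e₂, rfl⟩
    · exact absurd (by simp [h₂] : (ω b).head? = some c) (head?_omega_ne hΦ h₁')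
    have h₂' : ω b = u₂ ++ e₂ :: c :: v₂ := by simp [h₂]
    obtain rfl : e₁ = e₂ := (through_of_mem_Phi (hΦ a).1 h₁').2.unique rfl
      ((target_eq_source_of_mem_Phi (hΦ b).1 h₂').trans
        (target_eq_source_of_mem_Phi (hΦ a).1 h₁').symm)
    rw [ih h₁' h₂']

theorem omega_eq_of_mem (hx : c ∈ ω a) : ω c = ω a := by
  obtain ⟨u₁, v₁, h₁⟩ := List.append_of_mem (List.singleton_infix_iff _ _ |>.1 (hΦ c).1.2.1)
  obtain ⟨u₂, v₂, h₂⟩ := List.append_of_mem hx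
  rw [h₁, h₂, omega_heads_eq hΦ h₁ h₂, omega_tails_eq hΦ h₁ h₂]

/-- A repeated arrow in `ω a` would let one run through the cycle between its occurrences twice,
giving a longer path in `Φ_a`. -/
theorem omega_nodup (a : A) : (ω a).Nodup := by
  by_contra hdup
  obtain ⟨u, x, v, r, he⟩ := exists_eq_append_cons_append_cons_of_not_nodup hdup
  obtain ⟨⟨-, hch⟩, ha, hin⟩ := (hΦ a).1
  rw [he] at hch ha hin
  have hpump : u ++ x :: v ++ x :: v ++ x :: r ∈ Phi s t a := by
    refine ⟨⟨by simp, hch.pump⟩, ?_, fun y hy => hin y ?_⟩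
    · rw [List.singleton_infix_iff] at ha ⊢
      simp only [List.mem_append, List.mem_cons] at ha ⊢
      tauto
    · simp only [List.dropLast_append_of_ne_nil (List.cons_ne_nil x r), List.mem_append,
        List.mem_cons] at hy ⊢
      tauto
  have hlen := (hΦ a).2 _ hpump
  rw [he] at hlen
  simp at hlen
  omega

end Phi

namespace OmegaSpec

variable {s t : A → V} {ω : A → List A}

theorem mem_self (hω : OmegaSpec s t ω) (a : A) : a ∈ ω a := by
  by_cases hcyc : IsCyclicQuiver s t
  · obtain ⟨p, -, -, hall, -, hωp⟩ := hω.1 hcyc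
    exact hωp a ▸ hall a
  · exact (List.singleton_infix_iff _ _).1 ((hω.2 hcyc a).1.2.1)

theorem isPath (hω : OmegaSpec s t ω) (a : A) : IsPath s t (ω a) := by
  by_cases hcyc : IsCyclicQuiver s t
  · obtain ⟨p, hp, -, -, -, hωp⟩ := hω.1 hcyc
    exact hωp a ▸ hp
  · exact (hω.2 hcyc a).1.1

theorem nodup (hω : OmegaSpec s t ω) (a : A) : (ω a).Nodup := by
  by_cases hcyc : IsCyclicQuiver s t
  · obtain ⟨p, -, hnd, -, -, hωp⟩ := hω.1 hcyc
    exact hωp a ▸ hnd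
  · exact omega_nodup (hω.2 hcyc) a

theorem eq_of_mem (hω : OmegaSpec s t ω) {a x : A} (hx : x ∈ ω a) : ω x = ω a := by
  by_cases hcyc : IsCyclicQuiver s t
  · obtain ⟨p, -, -, -, -, hωp⟩ := hω.1 hcyc
    rw [hωp x, hωp a]
  · exact omega_eq_of_mem (hω.2 hcyc) hx

end OmegaSpec

section Component

variable {s t : A → V} {Zi : List A → Prop} {ω : A → List A} {N : Set A}
  {ws : List (List A)} {R : Set (List A)} {s1 : List A}

theorem CompEnum.exists_eq_of_mem (hws : CompEnum s t Zi ω N ws) {l : List A} (hl : l ∈ ws) :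
    ∃ b, ω b = l :=
  let ⟨b, _, hb⟩ := (hws.2.2.1 l).1 hl; ⟨b, hb⟩

theorem CompEnum.mem_iff (hω : OmegaSpec s t ω) (hN : IsComp s t Zi ω N)
    (hws : CompEnum s t Zi ω N ws) (a : A) : a ∈ N ↔ a ∈ ws.flatten := by
  obtain ⟨a0, rfl⟩ := hN
  rw [List.mem_flatten]
  constructor
  · exact fun ha => ⟨ω a, (hws.2.2.1 _).2 ⟨a, ha, rfl⟩, hω.mem_self a⟩
  · rintro ⟨l, hl, hal⟩
    obtain ⟨b, hb, rfl⟩ := (hws.2.2.1 l).1 hl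
    exact Relation.ReflTransGen.tail hb (.inl (hω.eq_of_mem hal).symm)

theorem CompEnum.nodup_flatten (hω : OmegaSpec s t ω) (hws : CompEnum s t Zi ω N ws) :
    ws.flatten.Nodup := by
  refine List.nodup_flatten.2
    ⟨fun l hl => ?_, hws.2.1.imp_of_mem fun hl₁ hl₂ hne x hx₁ hx₂ => hne ?_⟩
  · obtain ⟨b, rfl⟩ := hws.exists_eq_of_mem hl
    exact hω.nodup b
  · obtain ⟨b₁, rfl⟩ := hws.exists_eq_of_mem hl₁
    obtain ⟨b₂, rfl⟩ := hws.exists_eq_of_mem hl₂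
    exact (hω.eq_of_mem hx₁).symm.trans (hω.eq_of_mem hx₂)

theorem mem_of_sRel_eq_singleton (hS : SRel ω N R = {s1}) : s1 ∈ R :=
  (hS ▸ rfl : s1 ∈ SRel ω N R).1

theorem eq_or_isJuncRel_of_sRel_eq_singleton (hS : SRel ω N R = {s1}) {r : List A}
    (hr : r ∈ R) : r = s1 ∨ IsJuncRel ω N r := by
  by_cases hj : IsJuncRel ω N r
  · exact .inr hj
  · have hrS : r ∈ SRel ω N R := ⟨hr, hj⟩
    rw [hS] at hrS
    exact .inl hrS

theorem MinGen.soleRelation (hZ : ZeroClosed Zi) (hR : MinGen s t Zi N R)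
    (hS : SRel ω N R = {s1}) : SoleRelation s t Zi N s1 := by
  have hs1 := mem_of_sRel_eq_singleton hS
  refine fun p hp hc => ⟨fun hz => ?_, fun h => hZ _ _ (hR.1 s1 hs1).2 h⟩
  obtain ⟨r, hr, hrp⟩ := (hR.2.1 p hp).1 hz
  rcases eq_or_isJuncRel_of_sRel_eq_singleton hS hr with rfl | ⟨-, -, -, -, x, -, y, -, rfl⟩
  · exact hrp
  · exact absurd (hR.1 _ hr).2 (List.isChain_pair.1 (hc.infix hrp)).2

/-- By minimality of `R`, a quadratic relation inside `s1` would be `s1` itself. -/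
theorem MinGen.isChain_s1 (hR : MinGen s t Zi N R) (hS : SRel ω N R = {s1})
    (hlen : 3 ≤ s1.length) : s1.IsChain (NonzeroStep s t Zi) := by
  have hs1 := mem_of_sRel_eq_singleton hS
  obtain ⟨⟨⟨-, hch⟩, hN⟩, -⟩ := hR.1 s1 hs1
  refine List.isChain_iff_forall_rel_of_append_cons_cons.2 fun x y u v h => ?_
  have hxy : [x, y] <:+: s1 := ⟨u, v, by simp [h]⟩
  have hxyt := List.isChain_iff_forall_rel_of_append_cons_cons.1 hch h
  refine ⟨hxyt, fun hz => ?_⟩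
  obtain ⟨r, hr, hrxy⟩ := (hR.2.1 _ ⟨⟨by simp, List.isChain_pair.2 hxyt⟩,
    fun z hz => hN z (hxy.subset hz)⟩).1 hz
  have := (hR.2.2 r hr s1 hs1 (hrxy.trans hxy)) ▸ hrxy.length_le
  simp at this
  omega

/-- A quadratic relation inside some `ω_b` would be a junction relation, ending at the last
arrow of `ω_b`. -/
theorem CompEnum.isChain_flatten (hω : OmegaSpec s t ω) (hN : IsComp s t Zi ω N)
    (hws : CompEnum s t Zi ω N ws) (hR : MinGen s t Zi N R) (hS : SRel ω N R = {s1})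
    (hlen : 3 ≤ s1.length) : ws.flatten.IsChain (NonzeroStep s t Zi) := by
  refine (List.isChain_flatten fun h => ?_).2 ⟨fun l hl => ?_, hws.2.2.2.1.imp fun l l' h => ?_⟩
  · obtain ⟨b, hb⟩ := hws.exists_eq_of_mem h
    exact (hω.isPath b).1 hb
  · obtain ⟨b, rfl⟩ := hws.exists_eq_of_mem hl
    refine List.isChain_iff_forall_rel_of_append_cons_cons.2 fun x y u v h => ?_
    have hxyt := List.isChain_iff_forall_rel_of_append_cons_cons.1 (hω.isPath b).2 h
    refine ⟨hxyt, fun hz => ?_⟩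
    have hxyN : ∀ z ∈ [x, y], z ∈ N := fun z hz =>
      (hws.mem_iff hω hN z).2 (List.mem_flatten.2 ⟨ω b, hl, by simp [h] at hz ⊢; tauto⟩)
    obtain ⟨r, hr, hrxy⟩ := (hR.2.1 _ ⟨⟨by simp, List.isChain_pair.2 hxyt⟩, hxyN⟩).1 hz
    rcases eq_or_isJuncRel_of_sRel_eq_singleton hS hr with rfl | ⟨a', -, -, -, x', hx', y', -, rfl⟩
    · have := hrxy.length_le
      simp at this
      omega
    obtain ⟨rfl, rfl⟩ : x' = x ∧ y' = y := by simpa using hrxy.eq_of_length rfl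
    rw [← hω.eq_of_mem (List.mem_of_mem_getLast? hx'),
      hω.eq_of_mem (h ▸ List.mem_append_right u List.mem_cons_self), h] at hx'
    exact not_mem_getLast?_of_nodup (h ▸ hω.nodup b) hx'
  · obtain ⟨x, hx, y, hy, hxy⟩ := h
    intro x' hx' y' hy'
    rwa [Option.mem_unique hx' hx, Option.mem_unique hy' hy]

theorem singleRelationComponent (hω : OmegaSpec s t ω) (hZ : ZeroClosed Zi)
    (hN : IsComp s t Zi ω N) (hws : CompEnum s t Zi ω N ws) (hR : MinGen s t Zi N R)
    (hS : SRel ω N R = {s1}) (hlen : 3 ≤ s1.length) :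
    SingleRelationComponent s t Zi N ws.flatten s1 where
  isChain := hws.isChain_flatten hω hN hR hS hlen
  nodup := hws.nodup_flatten hω
  mem_iff := hws.mem_iff hω hN
  sole := hR.soleRelation hZ hS
  isChain_s1 := hR.isChain_s1 hS hlen
  subset_s1 x hx := (hws.mem_iff hω hN x).1
    ((hR.1 s1 (mem_of_sRel_eq_singleton hS)).1.2 x hx)

end Component

theorem stmt_15_general (s t : A → V) (Zi : List A → Prop)
    (ω : A → List A) (hω : OmegaSpec s t ω)
    (hZ : ZeroClosed Zi)
    (hsm : SpecialMultiserial s t Zi)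
    (N : Set A) (hN : IsComp s t Zi ω N)
    (ws : List (List A)) (hws : CompEnum s t Zi ω N ws)
    (R : Set (List A)) (hR : MinGen s t Zi N R)
    (s1 : List A) (hS : SRel ω N R = {s1}) (hlen : 3 ≤ s1.length) :
    UMPin s t Zi N ↔ JunctionOK s t Zi ws.flatten ws.flatten := by
  have hC := singleRelationComponent hω hZ hN hws hR hS hlen
  refine ⟨fun hU => ?_, hC.umpIn hZ hsm (List.ne_nil_of_length_pos (by omega))⟩
  by_contra hend
  exact hC.not_umpIn hZ hsm hlen hend hU

/-- if `S_N = {s_1}` with `σ_1 > 1` (i.e. `s_1` of length greater than two),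
then `A_N` is a UMP algebra iff the junction `ω_n^{l_n} ω_0^0` is not in `I_N`. -/
theorem stmt_15 [Fintype V] [Fintype A] (s t : A → V) (Zi : List A → Prop)
    (ω : A → List A) (hω : OmegaSpec s t ω)
    (hZ : ZeroClosed Zi) (hadm : Admissible s t Zi)
    (hsm : SpecialMultiserial s t Zi)
    (N : Set A) (hN : IsComp s t Zi ω N)
    (ws : List (List A)) (hws : CompEnum s t Zi ω N ws)
    (R : Set (List A)) (hR : MinGen s t Zi N R)
    (s1 : List A) (hS : SRel ω N R = {s1}) (hlen : 3 ≤ s1.length) :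
    UMPin s t Zi N ↔ JunctionOK s t Zi ws.flatten ws.flatten :=
  stmt_15_general s t Zi ω hω hZ hsm N hN ws hws R hR s1 hS hlen

end UMPPaper
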